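/- arXiv:2210.09702 — 6 statements merged into one kernel-verified Lean document; each statement's English description precedes it below -/
import Mathlib

section
/- Let x1, x2, x3 be nonzero complex numbers and let M be the 3×3 matrix with entries M_{jk} = x_j^{2^{k-1}} − x_j^{-2^{k-1}}. Then det(M) = (∏_{j=1}^3 (x_j − x_j^{-1})) · (∏_{k=1}^3 (x_k + x_k^{-1} − x_{k+1} − x_{k+1}^{-1})) · (∑_{ℓ=1}^3 (x_ℓ + x_ℓ^{-1})), where indices in the middle product are taken modulo 3. -/
open Matrix

/- With `y = x + x⁻¹`, row `j` of the matrix is `(x_j - x_j⁻¹) • (1, y_j, y_j ^ 3 - 2 y_j)`.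
Pulling out the row factors leaves a Vandermonde-type determinant in the columns `1, y, y ^ 3`,
which is the Vandermonde product times the complete symmetric polynomial `y₁ + y₂ + y₃`. -/

theorem pow_four_sub_inv_pow_four {K : Type*} [Field K] (x : K) :
    x ^ 4 - x⁻¹ ^ 4 = (x - x⁻¹) * (x + x⁻¹) * ((x + x⁻¹) ^ 2 - 2) := by
  rcases eq_or_ne x 0 with rfl | hx
  · simp
  · field_simp
    ring

theorem det_fin_three_mul_cubic {R : Type*} [CommRing R] (s₁ s₂ s₃ y₁ y₂ y₃ c : R) :
    det !![s₁, s₁ * y₁, s₁ * y₁ * (y₁ ^ 2 - c);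
           s₂, s₂ * y₂, s₂ * y₂ * (y₂ ^ 2 - c);
           s₃, s₃ * y₃, s₃ * y₃ * (y₃ ^ 2 - c)] =
      s₁ * s₂ * s₃ * ((y₁ - y₂) * (y₂ - y₃) * (y₃ - y₁)) * (y₁ + y₂ + y₃) := by
  simp only [det_fin_three, of_apply, cons_val', cons_val_zero, cons_val_one, cons_val_two,
    empty_val', cons_val_fin_one, tail_cons, vecHead]
  ring

theorem stmt_4_general (x1 x2 x3 : ℂ) :
    Matrix.det !![x1 - x1⁻¹, x1 ^ 2 - x1⁻¹ ^ 2, x1 ^ 4 - x1⁻¹ ^ 4;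
                  x2 - x2⁻¹, x2 ^ 2 - x2⁻¹ ^ 2, x2 ^ 4 - x2⁻¹ ^ 4;
                  x3 - x3⁻¹, x3 ^ 2 - x3⁻¹ ^ 2, x3 ^ 4 - x3⁻¹ ^ 4] =
      ((x1 - x1⁻¹) * (x2 - x2⁻¹) * (x3 - x3⁻¹)) *
      ((x1 + x1⁻¹ - x2 - x2⁻¹) * (x2 + x2⁻¹ - x3 - x3⁻¹) * (x3 + x3⁻¹ - x1 - x1⁻¹)) *
      ((x1 + x1⁻¹) + (x2 + x2⁻¹) + (x3 + x3⁻¹)) := by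
  have sq_sub_inv_sq (x : ℂ) : x ^ 2 - x⁻¹ ^ 2 = (x - x⁻¹) * (x + x⁻¹) := by ring
  rw [sq_sub_inv_sq x1, sq_sub_inv_sq x2, sq_sub_inv_sq x3, pow_four_sub_inv_pow_four x1,
    pow_four_sub_inv_pow_four x2, pow_four_sub_inv_pow_four x3, det_fin_three_mul_cubic]
  ring

/-- det of the 3×3 matrix with entries x_j^(2^(k-1)) − x_j^(−2^(k-1)). -/
theorem stmt_4 (x1 x2 x3 : ℂ) (h1 : x1 ≠ 0) (h2 : x2 ≠ 0) (h3 : x3 ≠ 0) :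
    Matrix.det !![x1 - x1⁻¹, x1 ^ 2 - x1⁻¹ ^ 2, x1 ^ 4 - x1⁻¹ ^ 4;
                  x2 - x2⁻¹, x2 ^ 2 - x2⁻¹ ^ 2, x2 ^ 4 - x2⁻¹ ^ 4;
                  x3 - x3⁻¹, x3 ^ 2 - x3⁻¹ ^ 2, x3 ^ 4 - x3⁻¹ ^ 4] =
      ((x1 - x1⁻¹) * (x2 - x2⁻¹) * (x3 - x3⁻¹)) *
      ((x1 + x1⁻¹ - x2 - x2⁻¹) * (x2 + x2⁻¹ - x3 - x3⁻¹) * (x3 + x3⁻¹ - x1 - x1⁻¹)) *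
      ((x1 + x1⁻¹) + (x2 + x2⁻¹) + (x3 + x3⁻¹)) :=
  stmt_4_general x1 x2 x3
end

section
/- Let x1, x2, x3 be distinct complex numbers and c1, c2, c3 complex numbers with c1·x1^r + c2·x2^r + c3·x3^r = 0 for all r ∈ {1, 2, −1, −2}, all x_j nonzero, and c1 + c2 + c3 ≠ 0. Then x_j² = x_{j+1}·x_{j+2} for each j (indices mod 3). -/
/-!
Write `e₁, e₂, e₃` for the elementary symmetric functions of `x₁, x₂, x₃` and `C = c₁ + c₂ + c₃`.
Each `xⱼ` is a root of `X³ - e₁X² + e₂X - e₃`, so `e₃ xⱼ⁻¹ = xⱼ² - e₁xⱼ + e₂`; weighting by `cⱼ`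
and summing, the relations for `r = -1, 2, 1` leave `e₂ C = 0`. The same argument applied to the
reciprocals `xⱼ⁻¹` (relations `r = 1, -2, -1`) gives `e₂(x⁻¹) C = (e₁ / e₃) C = 0`. As `C ≠ 0`,
`e₁ = e₂ = 0`, and then `xⱼ² = xⱼ e₁ - e₂ + xⱼ₊₁ xⱼ₊₂ = xⱼ₊₁ xⱼ₊₂`.
-/

theorem pairwise_sum_mul_coeff_sum_eq_zero {K : Type*} [Field K] {x₁ x₂ x₃ c₁ c₂ c₃ : K}
    (hx₁ : x₁ ≠ 0) (hx₂ : x₂ ≠ 0) (hx₃ : x₃ ≠ 0)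
    (h₁ : c₁ * x₁ + c₂ * x₂ + c₃ * x₃ = 0)
    (h₂ : c₁ * x₁ ^ 2 + c₂ * x₂ ^ 2 + c₃ * x₃ ^ 2 = 0)
    (hinv : c₁ * x₁⁻¹ + c₂ * x₂⁻¹ + c₃ * x₃⁻¹ = 0) :
    (x₁ * x₂ + x₂ * x₃ + x₃ * x₁) * (c₁ + c₂ + c₃) = 0 := by
  field_simp at hinv
  linear_combination hinv - h₂ + (x₁ + x₂ + x₃) * h₁

theorem sq_eq_mul_of_sum_eq_zero_of_pairwise_sum_eq_zero {R : Type*} [CommRing R]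
    {x₁ x₂ x₃ : R} (he₁ : x₁ + x₂ + x₃ = 0) (he₂ : x₁ * x₂ + x₂ * x₃ + x₃ * x₁ = 0) :
    x₁ ^ 2 = x₂ * x₃ ∧ x₂ ^ 2 = x₃ * x₁ ∧ x₃ ^ 2 = x₁ * x₂ :=
  ⟨by linear_combination x₁ * he₁ - he₂, by linear_combination x₂ * he₁ - he₂,
    by linear_combination x₃ * he₁ - he₂⟩

theorem stmt_5_general (x1 x2 x3 c1 c2 c3 : ℂ)
    (hx1 : x1 ≠ 0) (hx2 : x2 ≠ 0) (hx3 : x3 ≠ 0)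
    (hrel : ∀ r : ℤ, r = 1 ∨ r = 2 ∨ r = -1 ∨ r = -2 →
      c1 * x1 ^ r + c2 * x2 ^ r + c3 * x3 ^ r = 0)
    (hc : c1 + c2 + c3 ≠ 0) :
    x1 ^ 2 = x2 * x3 ∧ x2 ^ 2 = x3 * x1 ∧ x3 ^ 2 = x1 * x2 := by
  have h₁ : c1 * x1 + c2 * x2 + c3 * x3 = 0 := by simpa using hrel 1 (by norm_num)
  have h₂ : c1 * x1 ^ 2 + c2 * x2 ^ 2 + c3 * x3 ^ 2 = 0 := by simpa using hrel 2 (by norm_num)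
  have hm₁ : c1 * x1⁻¹ + c2 * x2⁻¹ + c3 * x3⁻¹ = 0 := by simpa using hrel (-1) (by norm_num)
  have hm₂ : c1 * x1⁻¹ ^ 2 + c2 * x2⁻¹ ^ 2 + c3 * x3⁻¹ ^ 2 = 0 := by
    simpa [zpow_neg, inv_pow] using hrel (-2) (by norm_num)
  have he₂ := (mul_eq_zero.mp
    (pairwise_sum_mul_coeff_sum_eq_zero hx1 hx2 hx3 h₁ h₂ hm₁)).resolve_right hc
  have he₂inv := (mul_eq_zero.mp (pairwise_sum_mul_coeff_sum_eq_zero (inv_ne_zero hx1)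
    (inv_ne_zero hx2) (inv_ne_zero hx3) hm₁ hm₂ (by simpa using h₁))).resolve_right hc
  have he₁ : x1 + x2 + x3 = 0 := by
    field_simp at he₂inv
    linear_combination he₂inv
  exact sq_eq_mul_of_sum_eq_zero_of_pairwise_sum_eq_zero he₁ he₂

/-- If c1 x1^r + c2 x2^r + c3 x3^r = 0 for r ∈ {1,2,−1,−2}, with x1,x2,x3 distinct
and nonzero and c1 + c2 + c3 ≠ 0, then x_j² = x_{j+1} x_{j+2} for each j (mod 3). -/
theorem stmt_5 (x1 x2 x3 c1 c2 c3 : ℂ)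
    (hx1 : x1 ≠ 0) (hx2 : x2 ≠ 0) (hx3 : x3 ≠ 0)
    (h12 : x1 ≠ x2) (h23 : x2 ≠ x3) (h13 : x1 ≠ x3)
    (hrel : ∀ r : ℤ, r = 1 ∨ r = 2 ∨ r = -1 ∨ r = -2 →
      c1 * x1 ^ r + c2 * x2 ^ r + c3 * x3 ^ r = 0)
    (hc : c1 + c2 + c3 ≠ 0) :
    x1 ^ 2 = x2 * x3 ∧ x2 ^ 2 = x3 * x1 ∧ x3 ^ 2 = x1 * x2 :=
  stmt_5_general x1 x2 x3 c1 c2 c3 hx1 hx2 hx3 hrel hc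
end

section
/- Suppose p and q are nonnegative integers with q > 0, and p + 1 is a rational root of the quadratic X² − (q+1)X + q(q+1)/2 = 0. Then q = 1 and p = 0. -/
/-! Completing the square, `x` is a root exactly when `(2x - (q+1))² = (q+1)(1-q)`. For an integer
`q > 0` the right-hand side is negative unless `q = 1`, and then the square vanishes, so `x = 1`. -/

lemma sq_two_mul_sub_eq_of_root {K : Type*} [Field K] [CharZero K] {x q : K}
    (h : x ^ 2 - (q + 1) * x + q * (q + 1) / 2 = 0) :
    (2 * x - (q + 1)) ^ 2 = (q + 1) * (1 - q) := by
  linear_combination 4 * h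

lemma eq_one_and_eq_zero_of_sq_eq_add_one_mul_one_sub {y q : ℤ} (hq : 0 < q) (h : y ^ 2 = (q + 1) * (1 - q)) :
    q = 1 ∧ y = 0 := by
  have hq1 : q = 1 := by nlinarith [sq_nonneg y]
  subst hq1
  exact ⟨rfl, pow_eq_zero_iff two_ne_zero |>.mp (by simpa using h)⟩

theorem stmt_8_general (p q : ℤ) (hq : 0 < q)
    (h : ((p : ℚ) + 1) ^ 2 - ((q : ℚ) + 1) * ((p : ℚ) + 1) + (q : ℚ) * ((q : ℚ) + 1) / 2 = 0) :
    q = 1 ∧ p = 0 := by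
  have hsq : (2 * (p + 1) - (q + 1)) ^ 2 = (q + 1) * (1 - q) := by
    exact_mod_cast sq_two_mul_sub_eq_of_root h
  obtain ⟨rfl, hy⟩ := eq_one_and_eq_zero_of_sq_eq_add_one_mul_one_sub hq hsq
  exact ⟨rfl, by omega⟩

/-- If p ≥ 0, q > 0 are integers and p + 1 is a root of
X² − (q+1)X + q(q+1)/2 = 0, then q = 1 and p = 0. -/
theorem stmt_8 (p q : ℤ) (hp : 0 ≤ p) (hq : 0 < q)
    (h : ((p : ℚ) + 1) ^ 2 - ((q : ℚ) + 1) * ((p : ℚ) + 1) + (q : ℚ) * ((q : ℚ) + 1) / 2 = 0) :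
    q = 1 ∧ p = 0 :=
  stmt_8_general p q hq h
end

section
/- Suppose p and q are nonnegative integers with q > 0, and p + 1 is a rational root of the quadratic X² − (4q/3 + 1)X + (2/3)q(q+1) = 0. Then q = 1 and p = 0. -/
/-!
Clearing denominators, `x = p + 1` is an integer root of `3X² − (4q + 3)X + 2q(q + 1)`, whose
discriminant is `9 − 8q²`. It is a square only if `q² ≤ 1`, so `q = 1`, and then the roots are
`1` and `4/3`, of which only `1` is an integer.
-/

lemma sq_sub_eq_of_root {x q : ℤ}
    (h : 3 * x ^ 2 - (4 * q + 3) * x + 2 * q * (q + 1) = 0) :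
    (6 * x - (4 * q + 3)) ^ 2 = 9 - 8 * q ^ 2 := by
  linear_combination 12 * h

lemma eq_one_of_root {x q : ℤ} (hq : 0 < q)
    (h : 3 * x ^ 2 - (4 * q + 3) * x + 2 * q * (q + 1) = 0) :
    q = 1 ∧ x = 1 := by
  have hq1 : q = 1 := by
    nlinarith [sq_nonneg (6 * x - (4 * q + 3)), sq_sub_eq_of_root h]
  subst hq1
  have hfactor : (x - 1) * (3 * x - 4) = 0 := by linear_combination h
  rcases mul_eq_zero.mp hfactor with hx | hx <;> omega

theorem stmt_9_general (p q : ℤ) (hq : 0 < q)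
    (h : ((p : ℚ) + 1) ^ 2 - (4 * (q : ℚ) / 3 + 1) * ((p : ℚ) + 1)
        + 2 / 3 * (q : ℚ) * ((q : ℚ) + 1) = 0) :
    q = 1 ∧ p = 0 := by
  have hint : 3 * (p + 1) ^ 2 - (4 * q + 3) * (p + 1) + 2 * q * (q + 1) = 0 := by
    have hrat : ((3 * (p + 1) ^ 2 - (4 * q + 3) * (p + 1) + 2 * q * (q + 1) : ℤ) : ℚ) = 0 := by
      push_cast
      linear_combination 3 * h
    exact_mod_cast hrat
  obtain ⟨hq1, hp1⟩ := eq_one_of_root hq hint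
  exact ⟨hq1, by omega⟩

/-- If p ≥ 0, q > 0 are integers and p + 1 is a root of
X² − (4q/3 + 1)X + (2/3)q(q+1) = 0, then q = 1 and p = 0. -/
theorem stmt_9 (p q : ℤ) (hp : 0 ≤ p) (hq : 0 < q)
    (h : ((p : ℚ) + 1) ^ 2 - (4 * (q : ℚ) / 3 + 1) * ((p : ℚ) + 1)
        + 2 / 3 * (q : ℚ) * ((q : ℚ) + 1) = 0) :
    q = 1 ∧ p = 0 :=
  stmt_9_general p q hq h
end

section
/- Let y1, y2 be roots of unity of odd order with y1 ∉ {y2, y2^{-1}}, and suppose (y1 + y1^{-1})/(y2 + y2^{-1}) is a rational number. Then y1 + y1^{-1} and y2 + y2^{-1} are rational, i.e., the orders of y1 and y2 each divide 3 or equal 1. -/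
/-!
Write `α = y₁ + y₁⁻¹`, `β = y₂ + y₂⁻¹` and `α / β = p / q` in lowest terms. Every conjugate of
`α` or `β` is a root of the Dickson polynomial `D_m(X) - 2`, hence of absolute value at most `2`.
By Bézout, `γ = α / p = β / q` is again an algebraic integer, with conjugates bounded by
`2 / |p|` and `2 / |q|`. If `|p| ≥ 2` or `|q| ≥ 2`, all conjugates of `γ` lie in the closed unit
disc while their product is a nonzero integer, so `|γ| = 1`; being real, `γ = ±1`, and `α`, `β`
are nonzero integers, which for roots of unity of odd order leaves only `2` and `-1`. Otherwise
`α = ±β`, that is `y₁ = ±y₂^{±1}`, excluded by hypothesis or by the parity of the orders.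
-/

open Polynomial

section Field

variable {K : Type*} [Field K]

theorem eq_or_eq_inv_of_add_inv_eq_add_inv {a c : K} (ha : a ≠ 0) (hc : c ≠ 0)
    (h : a + a⁻¹ = c + c⁻¹) : a = c ∨ a = c⁻¹ := by
  have key : (a - c) * (a * c - 1) = 0 := by
    field_simp at h
    linear_combination h
  rcases mul_eq_zero.mp key with h' | h'
  · exact .inl (sub_eq_zero.mp h')
  · exact .inr (eq_inv_of_mul_eq_one_left (sub_eq_zero.mp h'))

theorem exists_eq_add_inv [IsAlgClosed K] (ρ : K) : ∃ z ≠ 0, ρ = z + z⁻¹ := by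
  obtain ⟨z, hz⟩ := IsAlgClosed.exists_root (C 1 * X ^ 2 + C (-ρ) * X + C 1)
    (by rw [degree_quadratic one_ne_zero]; decide)
  simp only [IsRoot, eval_add, eval_mul, eval_pow, eval_C, eval_X] at hz
  have hz0 : z ≠ 0 := by rintro rfl; simp at hz
  refine ⟨z, hz0, ?_⟩
  field_simp
  linear_combination -hz

theorem isIntegral_add_inv {y : K} (hy : 0 < orderOf y) :
    IsIntegral ℤ (y + y⁻¹) :=
  ((IsPrimitiveRoot.orderOf y).isIntegral hy).add ((IsPrimitiveRoot.orderOf y).inv.isIntegral hy)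

theorem add_inv_ne_add_inv_of_odd_orderOf {y z : K} (hy : Odd (orderOf y))
    (hz : Odd (orderOf z)) (hne : y ≠ z ∧ y ≠ z⁻¹) : y + y⁻¹ ≠ z + z⁻¹ := by
  intro h
  have hy0 : y ≠ 0 := by rintro rfl; simp at hy
  have hz0 : z ≠ 0 := by rintro rfl; simp at hz
  rcases eq_or_eq_inv_of_add_inv_eq_add_inv hy0 hz0 h with h | h
  exacts [hne.1 h, hne.2 h]

variable [CharZero K] {y : K}

theorem pow_ne_neg_one_of_odd_orderOf (hy : Odd (orderOf y)) (k : ℕ) : y ^ k ≠ -1 := by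
  intro h
  have h1 : y ^ (k * orderOf y) = 1 := by rw [mul_comm, pow_mul, pow_orderOf_eq_one, one_pow]
  rw [pow_mul, h, hy.neg_one_pow] at h1
  norm_num at h1

theorem ne_neg_of_odd_orderOf {z : K} (hy : Odd (orderOf y)) (hz : Odd (orderOf z)) :
    y ≠ -z := by
  rintro rfl
  refine pow_ne_neg_one_of_odd_orderOf hy (orderOf z) ?_
  rw [hz.neg_pow, pow_orderOf_eq_one]

theorem add_inv_ne_zero_of_odd_orderOf (hy : Odd (orderOf y)) : y + y⁻¹ ≠ 0 := by
  intro h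
  have hy0 : y ≠ 0 := by rintro rfl; simp at hy
  refine pow_ne_neg_one_of_odd_orderOf hy 2 ?_
  field_simp at h
  linear_combination h

theorem add_inv_ne_neg_add_inv_of_odd_orderOf {z : K} (hy : Odd (orderOf y))
    (hz : Odd (orderOf z)) : y + y⁻¹ ≠ -(z + z⁻¹) := by
  intro h
  have hy0 : y ≠ 0 := by rintro rfl; simp at hy
  have hz0 : z ≠ 0 := by rintro rfl; simp at hz
  rw [neg_add, ← inv_neg] at h
  rcases eq_or_eq_inv_of_add_inv_eq_add_inv hy0 (neg_ne_zero.mpr hz0) h with h | h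
  · exact ne_neg_of_odd_orderOf hy hz h
  · rw [inv_neg] at h
    have hinv : orderOf z⁻¹ = orderOf z :=
      orderOf_eq_orderOf_iff.mpr fun n => by rw [inv_pow, inv_eq_one]
    exact ne_neg_of_odd_orderOf hy (hinv ▸ hz) h

end Field

theorem norm_add_inv_le_two {z : ℂ} (hz : ‖z‖ = 1) : ‖z + z⁻¹‖ ≤ 2 := by
  calc ‖z + z⁻¹‖ ≤ ‖z‖ + ‖z⁻¹‖ := norm_add_le _ _
    _ = 2 := by rw [norm_inv, hz]; norm_num

theorem im_add_inv_eq_zero {z : ℂ} (hz : ‖z‖ = 1) : (z + z⁻¹).im = 0 := by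
  rw [Complex.inv_eq_conj hz, Complex.add_conj, Complex.ofReal_im]

theorem norm_le_two_of_eval_dickson_eq_two {m : ℕ} (hm : m ≠ 0) {ρ : ℂ}
    (h : (dickson 1 (1 : ℂ) m).eval ρ = 2) : ‖ρ‖ ≤ 2 := by
  obtain ⟨z, hz, rfl⟩ := exists_eq_add_inv ρ
  rw [dickson_one_one_eval_add_inv _ _ (mul_inv_cancel₀ hz), inv_pow] at h
  have hzm : z ^ m = 1 := by
    have h' : z ^ m + (z ^ m)⁻¹ = 1 + 1⁻¹ := by rw [h]; norm_num
    simpa using eq_or_eq_inv_of_add_inv_eq_add_inv (pow_ne_zero m hz) one_ne_zero h'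
  exact norm_add_inv_le_two (Complex.norm_eq_one_of_pow_eq_one hzm hm)

theorem IsConjRoot.aeval_eq_zero_of_aeval_eq_zero {K A : Type*} [Field K] [CommRing A]
    [Algebra K A] {x ρ : A} (h : IsConjRoot K x ρ) {f : K[X]} (hf : aeval x f = 0) :
    aeval ρ f = 0 := by
  obtain ⟨g, rfl⟩ := minpoly.dvd K x hf
  rw [map_mul, h.aeval_eq_zero, zero_mul]

theorem norm_intCast_mul_le_two_of_isConjRoot {y x ρ : ℂ} {m : ℕ} (hm : m ≠ 0)
    (hy : y ^ m = 1) {n : ℤ} (hx : n * x = y + y⁻¹) (hρ : IsConjRoot ℚ x ρ) :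
    ‖(n : ℂ) * ρ‖ ≤ 2 := by
  have hD (w : ℂ) : aeval w ((dickson 1 (1 : ℚ) m).comp (C (n : ℚ) * X) - 2) =
      (dickson 1 (1 : ℂ) m).eval (n * w) - 2 := by
    rw [map_sub, aeval_comp, aeval_def, eval₂_eq_eval_map, map_dickson, map_one, map_ofNat]
    simp
  have hx2 : aeval x ((dickson 1 (1 : ℚ) m).comp (C (n : ℚ) * X) - 2) = 0 := by
    have hy0 : y ≠ 0 := by rintro rfl; simp [zero_pow hm] at hy
    rw [hD, hx, dickson_one_one_eval_add_inv _ _ (mul_inv_cancel₀ hy0), inv_pow, hy]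
    norm_num
  have := hρ.aeval_eq_zero_of_aeval_eq_zero hx2
  rw [hD, sub_eq_zero] at this
  exact norm_le_two_of_eval_dickson_eq_two hm this

theorem norm_eq_one_of_isConjRoot_norm_le_one {x : ℂ} (hx : IsIntegral ℤ x) (hx0 : x ≠ 0)
    (h : ∀ ρ, IsConjRoot ℚ x ρ → ‖ρ‖ ≤ 1) : ‖x‖ = 1 := by
  have hxQ : IsIntegral ℚ x := hx.tower_top
  set P := (minpoly ℚ x).map (algebraMap ℚ ℂ)
  have hsplit : P.Splits := IsAlgClosed.splits _
  have hroots : ∀ ρ ∈ P.roots, ‖ρ‖₊ ≤ 1 := fun ρ hρ =>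
    h ρ ((isConjRoot_iff_mem_minpoly_aroots hxQ).mpr hρ)
  have hmem : x ∈ P.roots := (isConjRoot_iff_mem_minpoly_aroots hxQ).mp (IsConjRoot.refl)
  have hcoeff : 1 ≤ ‖P.coeff 0‖₊ := by
    have hQ := minpoly.isIntegrallyClosed_eq_field_fractions' ℚ hx
    have hk : (minpoly ℤ x).coeff 0 ≠ 0 := by
      have := minpoly.coeff_zero_ne_zero hxQ hx0
      rw [hQ, coeff_map] at this
      exact fun h => this (by rw [h, map_zero])
    rw [coeff_map, hQ, coeff_map, ← NNReal.coe_le_coe, coe_nnnorm, NNReal.coe_one]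
    simpa using (Int.cast_le (R := ℝ)).mpr (Int.one_le_abs hk)
  have hprod : ‖P.coeff 0‖₊ = (P.roots.map (‖·‖₊)).prod := by
    rw [hsplit.coeff_zero_eq_prod_roots_of_monic ((minpoly.monic hxQ).map _), nnnorm_mul,
      nnnorm_pow, nnnorm_neg, nnnorm_one, one_pow, one_mul]
    exact (P.roots.prod_hom nnnormHom).symm
  obtain ⟨t, ht⟩ := Multiset.exists_cons_of_mem hmem
  have ht1 : (t.map (‖·‖₊)).prod ≤ 1 := by
    simpa using Multiset.prod_le_pow_card (t.map (‖·‖₊)) 1 (by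
      simp only [Multiset.mem_map]
      rintro _ ⟨ρ, hρ, rfl⟩
      exact hroots ρ (ht ▸ Multiset.mem_cons_of_mem hρ))
  have : (1 : NNReal) ≤ ‖x‖₊ :=
    calc 1 ≤ ‖P.coeff 0‖₊ := hcoeff
      _ = ‖x‖₊ * (t.map (‖·‖₊)).prod := by rw [hprod, ht, Multiset.map_cons, Multiset.prod_cons]
      _ ≤ ‖x‖₊ * 1 := by gcongr
      _ = ‖x‖₊ := mul_one _
  exact le_antisymm (h x IsConjRoot.refl) (by exact_mod_cast this)

theorem exists_isCoprime_intCast_mul_eq {K : Type*} [Field K] [CharZero K] {α β : K} {r : ℚ}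
    (hβ : β ≠ 0) (h : α / β = r) : ∃ p q : ℤ, IsCoprime p q ∧ q ≠ 0 ∧ (q : K) * α = p * β := by
  refine ⟨r.num, r.den, ?_, by exact_mod_cast r.den_nz, ?_⟩
  · rw [Int.isCoprime_iff_gcd_eq_one]
    exact r.reduced
  · rw [div_eq_iff hβ, Rat.cast_def] at h
    rw [h]
    field_simp
    push_cast
    ring

theorem exists_isIntegral_intCast_mul_eq {A : Type*} [CommRing A] {α β : A} {p q : ℤ}
    (hpq : IsCoprime p q) (h : (q : A) * α = p * β) (hα : IsIntegral ℤ α)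
    (hβ : IsIntegral ℤ β) : ∃ γ, IsIntegral ℤ γ ∧ (p : A) * γ = α ∧ (q : A) * γ = β := by
  obtain ⟨a, b, hab⟩ := hpq
  have hab' : (a : A) * p + b * q = 1 := by exact_mod_cast congrArg (Int.cast : ℤ → A) hab
  refine ⟨a * α + b * β, ?_, by linear_combination α * hab' - b * h,
    by linear_combination β * hab' + a * h⟩
  simp only [← eq_intCast (algebraMap ℤ A)]
  exact (isIntegral_algebraMap.mul hα).add (isIntegral_algebraMap.mul hβ)

theorem orderOf_dvd_three_of_add_inv_eq_intCast {y : ℂ} (hy : Odd (orderOf y)) {k : ℤ}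
    (hk : k ≠ 0) (h : y + y⁻¹ = k) : orderOf y ∣ 3 := by
  refine orderOf_dvd_of_pow_eq_one ?_
  have hy0 : y ≠ 0 := by rintro rfl; simp at hy
  have hk2 : |k| ≤ 2 := by
    have := norm_add_inv_le_two (Complex.norm_eq_one_of_pow_eq_one (pow_orderOf_eq_one y)
      hy.pos.ne')
    rw [h, Complex.norm_intCast] at this
    exact_mod_cast this
  have hquad : y ^ 2 - k * y + 1 = 0 := by
    field_simp at h
    linear_combination h
  obtain rfl | rfl | rfl | rfl : k = -2 ∨ k = -1 ∨ k = 1 ∨ k = 2 := by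
    rw [abs_le] at hk2; omega
  · have hsq : (y + 1) ^ 2 = 0 := by linear_combination hquad
    refine absurd ?_ (pow_ne_neg_one_of_odd_orderOf hy 1)
    linear_combination (pow_eq_zero_iff two_ne_zero).mp hsq
  · linear_combination (y - 1) * hquad
  · exact absurd (by linear_combination (y + 1) * hquad) (pow_ne_neg_one_of_odd_orderOf hy 3)
  · have hsq : (y - 1) ^ 2 = 0 := by linear_combination hquad
    linear_combination (y ^ 2 + y + 1) * (pow_eq_zero_iff two_ne_zero).mp hsq

theorem eq_one_or_eq_neg_one_of_intCast_mul_eq_add_inv {y γ : ℂ} (hy : 0 < orderOf y) {n : ℤ}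
    (hn : 2 ≤ |n|) (hγ : IsIntegral ℤ γ) (hγ0 : γ ≠ 0) (h : n * γ = y + y⁻¹) :
    γ = 1 ∨ γ = -1 := by
  have hy1 : ‖y‖ = 1 := Complex.norm_eq_one_of_pow_eq_one (pow_orderOf_eq_one y) hy.ne'
  have hn1 : (1 : ℝ) ≤ |(n : ℝ)| / 2 := by
    rw [le_div_iff₀ two_pos, one_mul]; exact_mod_cast hn
  have hnorm : ‖γ‖ = 1 := norm_eq_one_of_isConjRoot_norm_le_one hγ hγ0 fun ρ hρ => by
    have := norm_intCast_mul_le_two_of_isConjRoot hy.ne' (pow_orderOf_eq_one y) h hρ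
    rw [norm_mul, Complex.norm_intCast] at this
    nlinarith [norm_nonneg ρ]
  have him : γ.im = 0 := by
    have : (n : ℝ) * γ.im = 0 := by simpa [im_add_inv_eq_zero hy1] using congrArg Complex.im h
    exact (mul_eq_zero.mp this).resolve_left (by norm_cast; rintro rfl; simp at hn)
  have hre : |γ.re| = 1 := by rw [Complex.abs_re_eq_norm.mpr him, hnorm]
  rcases abs_eq (zero_le_one' ℝ) |>.mp hre with h | h
  exacts [.inl (Complex.ext h him), .inr (Complex.ext (by simp [h]) (by simp [him]))]

/-- If y1, y2 are roots of unity of odd order with y1 ∉ {y2, y2⁻¹}, and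
(y1 + y1⁻¹)/(y2 + y2⁻¹) is rational, then y1 + y1⁻¹ and y2 + y2⁻¹ are rational,
i.e. the orders of y1 and y2 divide 3. -/
theorem stmt_14 (y1 y2 : ℂ)
    (h1 : Odd (orderOf y1)) (h2 : Odd (orderOf y2))
    (hne : y1 ≠ y2 ∧ y1 ≠ y2⁻¹)
    (hrat : ∃ r : ℚ, (y1 + y1⁻¹) / (y2 + y2⁻¹) = (r : ℂ)) :
    (∃ r : ℚ, y1 + y1⁻¹ = (r : ℂ)) ∧ (∃ r : ℚ, y2 + y2⁻¹ = (r : ℂ)) ∧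
    orderOf y1 ∣ 3 ∧ orderOf y2 ∣ 3 := by
  obtain ⟨r, hr⟩ := hrat
  have hα0 := add_inv_ne_zero_of_odd_orderOf h1
  obtain ⟨p, q, hpq, hq, hqp⟩ := exists_isCoprime_intCast_mul_eq
    (add_inv_ne_zero_of_odd_orderOf h2) hr
  obtain ⟨γ, hγ, hpγ, hqγ⟩ := exists_isIntegral_intCast_mul_eq hpq hqp
    (isIntegral_add_inv h1.pos) (isIntegral_add_inv h2.pos)
  have hp : p ≠ 0 := by rintro rfl; exact hα0 (by rw [← hpγ, Int.cast_zero, zero_mul])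
  have hγ0 : γ ≠ 0 := by rintro rfl; exact hα0 (by rw [← hpγ, mul_zero])
  have hbig : 2 ≤ |p| ∨ 2 ≤ |q| := by
    by_contra! hsmall
    rw [abs_lt, abs_lt] at hsmall
    rcases (by omega : p = q ∨ p = -q) with rfl | rfl
    · exact add_inv_ne_add_inv_of_odd_orderOf h1 h2 hne (hpγ.symm.trans hqγ)
    · refine add_inv_ne_neg_add_inv_of_odd_orderOf h1 h2 ?_
      rw [← hpγ, ← hqγ, Int.cast_neg, neg_mul]
  have hγ1 : γ = 1 ∨ γ = -1 := hbig.elim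
    (eq_one_or_eq_neg_one_of_intCast_mul_eq_add_inv h1.pos · hγ hγ0 hpγ)
    (eq_one_or_eq_neg_one_of_intCast_mul_eq_add_inv h2.pos · hγ hγ0 hqγ)
  obtain ⟨ε, hε, rfl⟩ : ∃ ε : ℤ, ε ≠ 0 ∧ γ = ε := by
    rcases hγ1 with rfl | rfl
    exacts [⟨1, one_ne_zero, Int.cast_one.symm⟩, ⟨-1, by norm_num, by norm_num⟩]
  have hα : y1 + y1⁻¹ = ((p * ε : ℤ) : ℂ) := by push_cast; exact hpγ.symm
  have hβ : y2 + y2⁻¹ = ((q * ε : ℤ) : ℂ) := by push_cast; exact hqγ.symm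
  exact ⟨⟨p * ε, by rw [hα]; norm_cast⟩, ⟨q * ε, by rw [hβ]; norm_cast⟩,
    orderOf_dvd_three_of_add_inv_eq_intCast h1 (mul_ne_zero hp hε) hα,
    orderOf_dvd_three_of_add_inv_eq_intCast h2 (mul_ne_zero hq hε) hβ⟩
end

section
/- Let K = ℚ(cos(2π/7)) and let x_j = exp(2πi·n_j/7) for (n1, n2, n3) = (1, 3, 5). Set c_j equal to the expression [(x_{j+1} − x_{j+1}^{-1})(x_{j+2}² − x_{j+2}^{-2}) − (x_{j+1}² − x_{j+1}^{-2})(x_{j+2} − x_{j+2}^{-1})] (indices mod 3). Then c1(x1 − x1^{-1}) + c2(x2 − x2^{-1}) + c3(x3 − x3^{-1}) = 0 and c1(x1² − x1^{-2}) + c2(x2² − x2^{-2}) + c3(x3² − x3^{-2}) = 0, and c1, c2, c3 are nonzero real numbers that are linearly independent over ℚ after dividing by c1. -/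
/-!
The numbers `c_j` are the 2 × 2 minors of the 3 × 2 matrix with rows
`(x_k - x_k⁻¹, x_k² - x_k⁻²)`, i.e. `c` is the cross product of its two columns, hence orthogonal
to both: these are the two residue equations. As `|x_k| = 1`, every entry of that matrix is
purely imaginary, so the minors are real. Reducing with `ζ⁷ = 1` and `1 + ζ + ⋯ + ζ⁶ = 0` writes
the `c_j` in the power basis `1, ζ, …, ζ⁵` of `ℚ(ζ)`, and their `ℚ`-linear independence becomes
the rank of a rational 3 × 6 matrix.
-/

open Polynomial Nat

def sineMinor {K : Type*} [Field K] (y z : K) : K :=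
  (y - y⁻¹) * (z ^ 2 - z⁻¹ ^ 2) - (y ^ 2 - y⁻¹ ^ 2) * (z - z⁻¹)

theorem sineMinor_mul_sub_inv_add {K : Type*} [Field K] (x y z : K) :
    sineMinor y z * (x - x⁻¹) + sineMinor z x * (y - y⁻¹) + sineMinor x y * (z - z⁻¹) = 0 := by
  unfold sineMinor; ring

theorem sineMinor_mul_sq_sub_inv_sq_add {K : Type*} [Field K] (x y z : K) :
    sineMinor y z * (x ^ 2 - x⁻¹ ^ 2) + sineMinor z x * (y ^ 2 - y⁻¹ ^ 2) +
      sineMinor x y * (z ^ 2 - z⁻¹ ^ 2) = 0 := by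
  unfold sineMinor; ring

theorem inv_pow_eq_pow_sub_of_pow_eq_one {M : Type*} [DivisionMonoid M] {ζ : M} {n k : ℕ}
    (hζ : ζ ^ n = 1) (hk : k ≤ n) : (ζ ^ k)⁻¹ = ζ ^ (n - k) :=
  inv_eq_of_mul_eq_one_left <| by rw [← pow_add, Nat.sub_add_cancel hk, hζ]

theorem LinearIndependent.div_const {ι R A : Type*} [CommRing R] [DivisionRing A] [Algebra R A]
    {v : ι → A} (hv : LinearIndependent R v) {a : A} (ha : a ≠ 0) :
    LinearIndependent R fun i ↦ v i / a := by
  simpa [Function.comp_def, div_eq_mul_inv] using hv.map' (LinearMap.mulRight R a⁻¹) <|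
    LinearMap.ker_eq_bot.mpr <| mul_left_injective₀ (inv_ne_zero ha)

theorem sineMinor_im_eq_zero {y z : ℂ} (hy : ‖y‖ = 1) (hz : ‖z‖ = 1) :
    (sineMinor y z).im = 0 := by
  rw [← Complex.conj_eq_iff_im, sineMinor]
  simp only [map_sub, map_mul, map_pow, map_inv₀, ← Complex.inv_eq_conj hy,
    ← Complex.inv_eq_conj hz, inv_inv]
  ring

namespace IsPrimitiveRoot

variable {K : Type*} [Field K] {ζ : K}

theorem linearIndependent_pow_totient [CharZero K] {n : ℕ} (hζ : IsPrimitiveRoot ζ n)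
    (hn : 0 < n) : LinearIndependent ℚ fun i : Fin (φ n) ↦ ζ ^ (i : ℕ) := by
  have := linearIndependent_pow (K := ℚ) ζ
  rwa [← cyclotomic_eq_minpoly_rat hζ hn, natDegree_cyclotomic] at this

variable (hζ : IsPrimitiveRoot ζ 7)
include hζ

theorem geom_sum_seven_eq_zero :
    1 + ζ + ζ ^ 2 + ζ ^ 3 + ζ ^ 4 + ζ ^ 5 + ζ ^ 6 = 0 := by
  simpa [Finset.sum_range_succ] using hζ.geom_sum_eq_zero (by norm_num)

theorem inv_eq_pow_six : ζ⁻¹ = ζ ^ 6 := by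
  simpa using inv_pow_eq_pow_sub_of_pow_eq_one hζ.pow_eq_one (k := 1) (by norm_num)

theorem sineMinor_pow_three_pow_five :
    sineMinor (ζ ^ 3) (ζ ^ 5) = -4 - 2 * ζ ^ 2 - 3 * ζ ^ 3 - 3 * ζ ^ 4 - 2 * ζ ^ 5 := by
  have h7 := hζ.pow_eq_one
  rw [sineMinor, inv_pow_eq_pow_sub_of_pow_eq_one h7 (by norm_num : 3 ≤ 7),
    inv_pow_eq_pow_sub_of_pow_eq_one h7 (by norm_num : 5 ≤ 7)]
  linear_combination (-2 + 2 * ζ - ζ ^ 3 - ζ ^ 4 + 2 * ζ ^ 6 - ζ ^ 7) * h7 +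
    2 * hζ.geom_sum_seven_eq_zero

theorem sineMinor_pow_five_self :
    sineMinor (ζ ^ 5) ζ = 2 + ζ ^ 2 - 2 * ζ ^ 3 - 2 * ζ ^ 4 + ζ ^ 5 := by
  have h7 := hζ.pow_eq_one
  rw [sineMinor, hζ.inv_eq_pow_six, inv_pow_eq_pow_sub_of_pow_eq_one h7 (by norm_num : 5 ≤ 7)]
  linear_combination (2 + ζ ^ 2 - 2 * ζ ^ 3 - ζ ^ 4 + ζ ^ 7 + ζ ^ 9 - ζ ^ 10) * h7

theorem sineMinor_self_pow_three :
    sineMinor ζ (ζ ^ 3) = 1 - 3 * ζ ^ 2 - ζ ^ 3 - ζ ^ 4 - 3 * ζ ^ 5 := by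
  have h7 := hζ.pow_eq_one
  rw [sineMinor, hζ.inv_eq_pow_six, inv_pow_eq_pow_sub_of_pow_eq_one h7 (by norm_num : 3 ≤ 7)]
  linear_combination (2 + ζ - 2 * ζ ^ 2 - ζ ^ 5 + ζ ^ 7 + ζ ^ 8 - ζ ^ 9) * h7 +
    hζ.geom_sum_seven_eq_zero

theorem linearIndependent_sineMinors [CharZero K] :
    LinearIndependent ℚ ![sineMinor (ζ ^ 3) (ζ ^ 5), sineMinor (ζ ^ 5) ζ, sineMinor ζ (ζ ^ 3)] := by
  have hpow := hζ.linearIndependent_pow_totient (by norm_num)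
  rw [show φ 7 = 6 by decide] at hpow
  rw [Fintype.linearIndependent_iff] at hpow ⊢
  intro g hg
  rw [Fin.sum_univ_three] at hg
  simp only [Matrix.cons_val_zero, Matrix.cons_val_one, Matrix.cons_val_two, Matrix.head_cons,
    Matrix.tail_cons, hζ.sineMinor_pow_three_pow_five, hζ.sineMinor_pow_five_self,
    hζ.sineMinor_self_pow_three, Rat.smul_def] at hg
  -- the coefficients of `1, ζ², ζ³` already form a system of determinant 49
  have hcoeff := hpow ![-4 * g 0 + 2 * g 1 + g 2, 0, -2 * g 0 + g 1 - 3 * g 2,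
    -3 * g 0 - 2 * g 1 - g 2, -3 * g 0 - 2 * g 1 - g 2, -2 * g 0 + g 1 - 3 * g 2] (by
      simp only [Fin.sum_univ_six, Rat.smul_def, Matrix.cons_val, Fin.coe_ofNat_eq_mod,
        Nat.reduceMod]
      push_cast
      linear_combination hg)
  have h0 := hcoeff 0
  have h2 := hcoeff 2
  have h3 := hcoeff 3
  simp only [Matrix.cons_val] at h0 h2 h3
  intro i
  fin_cases i <;> simp only [Fin.zero_eta, Fin.mk_one, Fin.reduceFinMk] <;> linarith

end IsPrimitiveRoot

/-- For x1 = ζ7, x2 = ζ7³, x3 = ζ7⁵ (ζ7 = exp(2πi/7)) and the circumferences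
c_j = (x_{j+1} − x_{j+1}⁻¹)(x_{j+2}² − x_{j+2}⁻²) − (x_{j+1}² − x_{j+1}⁻²)(x_{j+2} − x_{j+2}⁻¹)
(indices mod 3), the two residue equations hold, and c1, c2, c3 are nonzero real
numbers that are linearly independent over ℚ after dividing by c1. -/
theorem stmt_16 (ζ x1 x2 x3 c1 c2 c3 : ℂ)
    (hζ : ζ = Complex.exp (2 * Real.pi * Complex.I / 7))
    (hx1 : x1 = ζ) (hx2 : x2 = ζ ^ 3) (hx3 : x3 = ζ ^ 5)
    (hc1 : c1 = (x2 - x2⁻¹) * (x3 ^ 2 - x3⁻¹ ^ 2) - (x2 ^ 2 - x2⁻¹ ^ 2) * (x3 - x3⁻¹))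
    (hc2 : c2 = (x3 - x3⁻¹) * (x1 ^ 2 - x1⁻¹ ^ 2) - (x3 ^ 2 - x3⁻¹ ^ 2) * (x1 - x1⁻¹))
    (hc3 : c3 = (x1 - x1⁻¹) * (x2 ^ 2 - x2⁻¹ ^ 2) - (x1 ^ 2 - x1⁻¹ ^ 2) * (x2 - x2⁻¹)) :
    c1 * (x1 - x1⁻¹) + c2 * (x2 - x2⁻¹) + c3 * (x3 - x3⁻¹) = 0 ∧
    c1 * (x1 ^ 2 - x1⁻¹ ^ 2) + c2 * (x2 ^ 2 - x2⁻¹ ^ 2) + c3 * (x3 ^ 2 - x3⁻¹ ^ 2) = 0 ∧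
    (c1 ≠ 0 ∧ c2 ≠ 0 ∧ c3 ≠ 0) ∧
    (c1.im = 0 ∧ c2.im = 0 ∧ c3.im = 0) ∧
    LinearIndependent ℚ ![c1 / c1, c2 / c1, c3 / c1] := by
  have hprim : IsPrimitiveRoot ζ 7 := hζ ▸ Complex.isPrimitiveRoot_exp 7 (by norm_num)
  have hnorm : ‖ζ‖ = 1 := hprim.norm'_eq_one (by norm_num)
  have hnorm_pow (k : ℕ) : ‖ζ ^ k‖ = 1 := by rw [norm_pow, hnorm, one_pow]
  have e1 : c1 = sineMinor x2 x3 := hc1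
  have e2 : c2 = sineMinor x3 x1 := hc2
  have e3 : c3 = sineMinor x1 x2 := hc3
  have hLI : LinearIndependent ℚ ![c1, c2, c3] := by
    rw [e1, e2, e3, hx1, hx2, hx3]
    exact hprim.linearIndependent_sineMinors
  have hc1ne : c1 ≠ 0 := by simpa using hLI.ne_zero 0
  refine ⟨e1 ▸ e2 ▸ e3 ▸ sineMinor_mul_sub_inv_add x1 x2 x3,
    e1 ▸ e2 ▸ e3 ▸ sineMinor_mul_sq_sub_inv_sq_add x1 x2 x3,
    ⟨hc1ne, by simpa using hLI.ne_zero 1, by simpa using hLI.ne_zero 2⟩, ?_, ?_⟩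
  · rw [e1, e2, e3, hx1, hx2, hx3]
    exact ⟨sineMinor_im_eq_zero (hnorm_pow 3) (hnorm_pow 5),
      sineMinor_im_eq_zero (hnorm_pow 5) hnorm, sineMinor_im_eq_zero hnorm (hnorm_pow 3)⟩
  have hdiv : ![c1 / c1, c2 / c1, c3 / c1] = fun i ↦ ![c1, c2, c3] i / c1 := by
    ext i; fin_cases i <;> rfl
  rw [hdiv]
  exact hLI.div_const hc1ne
end
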